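/- arXiv:2110.08440 — 3 statements merged into one kernel-verified Lean document; each statement's English description precedes it below -/
import Mathlib

section
/- Let f(u) = α + β√u with α, β ≥ 0 and let u* be its fixed point. Then for every u ≥ 0 and every t ∈ ℕ with t ≥ 1, |f^{(t)}(u) - u*| ≤ β^{(2 - 1/2^{t-1})} · |u - u*|^{1/2^t}, where f^{(t)} denotes the t-fold composition of f. -/
lemma sqrt_sub_sqrt_le (a b : ℝ) (hab : b ≤ a) :
    Real.sqrt a - Real.sqrt b ≤ Real.sqrt (a - b) := by
  rcases le_or_gt 0 b with hb | hb
  · have ha : 0 ≤ a := le_trans hb hab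
    have hab' : 0 ≤ a - b := sub_nonneg.2 hab
    nlinarith [Real.sq_sqrt hb, Real.sq_sqrt ha, Real.sq_sqrt hab',
      Real.sqrt_nonneg a, Real.sqrt_nonneg b, Real.sqrt_nonneg (a - b),
      mul_nonneg (Real.sqrt_nonneg b) (Real.sqrt_nonneg (a - b))]
  · rw [Real.sqrt_eq_zero_of_nonpos hb.le, sub_zero]
    exact Real.sqrt_le_sqrt (by linarith)

lemma abs_sqrt_sub_sqrt_le (a b : ℝ) :
    |Real.sqrt a - Real.sqrt b| ≤ Real.sqrt |a - b| := by
  rcases le_total b a with h | h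
  · rw [abs_of_nonneg (sub_nonneg.2 h), abs_of_nonneg
      (sub_nonneg.2 (Real.sqrt_le_sqrt h))]
    exact sqrt_sub_sqrt_le a b h
  · rw [abs_of_nonpos (sub_nonpos.2 h), abs_of_nonpos
      (sub_nonpos.2 (Real.sqrt_le_sqrt h)), neg_sub, neg_sub]
    exact sqrt_sub_sqrt_le b a h

theorem iterate_sqrt_map_hypercontract (α β : ℝ) (hα : 0 ≤ α) (hβ : 0 ≤ β)
    (f : ℝ → ℝ) (hf : ∀ u, f u = α + β * Real.sqrt u)
    (ustar : ℝ) (hustar : ustar = ((β + Real.sqrt (β ^ 2 + 4 * α)) / 2) ^ 2)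
    (u : ℝ) (hu : 0 ≤ u) (t : ℕ) (ht : 1 ≤ t) :
    |f^[t] u - ustar| ≤
      β ^ ((2 : ℝ) - 1 / 2 ^ (t - 1)) * |u - ustar| ^ ((1 : ℝ) / 2 ^ t) := by
  have hd : 0 ≤ β ^ 2 + 4 * α := by positivity
  have hsq : Real.sqrt (β ^ 2 + 4 * α) ^ 2 = β ^ 2 + 4 * α := Real.sq_sqrt hd
  have hus_nonneg : 0 ≤ ustar := by rw [hustar]; positivity
  have hsqrt_us : Real.sqrt ustar = (β + Real.sqrt (β ^ 2 + 4 * α)) / 2 := by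
    rw [hustar, Real.sqrt_sq (by positivity)]
  have hfix : f ustar = ustar := by
    rw [hf, hsqrt_us, hustar]
    nlinarith [hsq]
  -- one-step contraction
  have hstep : ∀ v : ℝ, |f v - ustar| ≤ β * Real.sqrt |v - ustar| := by
    intro v
    have : f v - ustar = β * (Real.sqrt v - Real.sqrt ustar) := by
      rw [hf]
      nth_rewrite 1 [← hfix]
      rw [hf]; ring
    rw [this, abs_mul, abs_of_nonneg hβ]
    exact mul_le_mul_of_nonneg_left (abs_sqrt_sub_sqrt_le v ustar) hβ
  rcases eq_or_lt_of_le hβ with hβ0 | hβ0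
  · -- β = 0 : f is constant α and ustar = α
    have hβ0 : β = 0 := hβ0.symm
    have hus : ustar = α := by
      rw [hustar, hβ0]
      rw [show (0:ℝ)^2 + 4*α = 4*α by ring, zero_add, div_pow,
        Real.sq_sqrt (by linarith : (0:ℝ) ≤ 4*α)]
      norm_num
    have hft : f^[t] u = α := by
      obtain ⟨s, rfl⟩ := Nat.exists_eq_add_of_le ht
      rw [add_comm, Function.iterate_succ_apply', hf, hβ0]
      ring
    rw [hft, hus, sub_self, abs_zero, hβ0]
    have hexp : (0:ℝ) < 2 - 1 / 2 ^ (t - 1) := by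
      have h1 : (1:ℝ) / 2 ^ (t-1) ≤ 1 := by
        rw [div_le_one (by positivity)]
        exact one_le_pow₀ (by norm_num)
      linarith
    rw [Real.zero_rpow (ne_of_gt hexp), zero_mul]
  · -- β > 0 : induction on k = t - 1
    have key : ∀ k : ℕ, |f^[k+1] u - ustar| ≤
        β ^ ((2 : ℝ) - 1 / 2 ^ k) * |u - ustar| ^ ((1 : ℝ) / 2 ^ (k+1)) := by
      intro k
      induction k with
      | zero =>
        rw [show ((2:ℝ) - 1 / 2 ^ (0:ℕ)) = 1 by norm_num, Real.rpow_one]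
        simpa [Real.sqrt_eq_rpow] using hstep u
      | succ n ih =>
        have h1 : |f^[n+2] u - ustar| ≤ β * Real.sqrt |f^[n+1] u - ustar| := by
          rw [Function.iterate_succ_apply']
          exact hstep _
        have h2 : Real.sqrt |f^[n+1] u - ustar| ≤
            Real.sqrt (β ^ ((2 : ℝ) - 1 / 2 ^ n) * |u - ustar| ^ ((1 : ℝ) / 2 ^ (n+1))) :=
          Real.sqrt_le_sqrt ih
        have hB : (0:ℝ) ≤ β ^ ((2 : ℝ) - 1 / 2 ^ n) := Real.rpow_nonneg hβ _
        have hX : (0:ℝ) ≤ |u - ustar| ^ ((1 : ℝ) / 2 ^ (n+1)) :=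
          Real.rpow_nonneg (abs_nonneg _) _
        have h3 : Real.sqrt (β ^ ((2 : ℝ) - 1 / 2 ^ n) * |u - ustar| ^ ((1 : ℝ) / 2 ^ (n+1)))
            = β ^ (((2 : ℝ) - 1 / 2 ^ n) / 2) * |u - ustar| ^ ((1 : ℝ) / 2 ^ (n+2)) := by
          rw [Real.sqrt_eq_rpow, Real.mul_rpow hB hX, ← Real.rpow_mul hβ,
            ← Real.rpow_mul (abs_nonneg _)]
          congr 1
          · ring
          · congr 1
            rw [pow_succ (2:ℝ) (n+1)]
            ring
        calc |f^[n+2] u - ustar| ≤ β * Real.sqrt |f^[n+1] u - ustar| := h1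
          _ ≤ β * (β ^ (((2 : ℝ) - 1 / 2 ^ n) / 2) * |u - ustar| ^ ((1 : ℝ) / 2 ^ (n+2))) := by
              rw [← h3]; exact mul_le_mul_of_nonneg_left h2 hβ
          _ = β ^ ((2 : ℝ) - 1 / 2 ^ (n+1)) * |u - ustar| ^ ((1 : ℝ) / 2 ^ (n+2)) := by
              rw [← mul_assoc]
              congr 1
              nth_rewrite 1 [show β = β ^ (1:ℝ) from (Real.rpow_one β).symm]
              rw [← Real.rpow_add hβ0]
              congr 1
              rw [pow_succ]
              field_simp
              ring
    have := key (t - 1)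
    rwa [Nat.sub_add_cancel ht] at this
end

section
/- Let f : ℝⁿ → ℝ be f(x) = max_i x_i (with n ≥ 1). For every x, y ∈ ℝⁿ there exists ζ ∈ ℝⁿ with ζ_i ≥ 0 for all i, ∑_i ζ_i = 1, and f(x) - f(y) = ⟨ζ, x - y⟩. -/
theorem max_mean_value (n : ℕ) (hn : 0 < n) (x y : Fin n → ℝ) :
    haveI : Nonempty (Fin n) := ⟨⟨0, hn⟩⟩
    ∃ ζ : Fin n → ℝ, (∀ i, 0 ≤ ζ i) ∧ (∑ i, ζ i = 1) ∧
      (Finset.univ.sup' Finset.univ_nonempty x - Finset.univ.sup' Finset.univ_nonempty y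
        = ∑ i, ζ i * (x i - y i)) := by
  haveI : Nonempty (Fin n) := ⟨⟨0, hn⟩⟩
  obtain ⟨i, -, hi⟩ := Finset.exists_mem_eq_sup' Finset.univ_nonempty x
  obtain ⟨j, -, hj⟩ := Finset.exists_mem_eq_sup' Finset.univ_nonempty y
  set fx := Finset.univ.sup' Finset.univ_nonempty x with hfx
  set fy := Finset.univ.sup' Finset.univ_nonempty y with hfy
  have ha : x j - y j ≤ fx - fy := by
    have : x j ≤ fx := Finset.le_sup' x (Finset.mem_univ j)
    rw [hj]; linarith
  have hb : fx - fy ≤ x i - y i := by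
    have : y i ≤ fy := Finset.le_sup' y (Finset.mem_univ i)
    rw [hi]; linarith
  rcases eq_or_lt_of_le (ha.trans hb) with hab | hab
  · refine ⟨fun k => if k = i then 1 else 0, ?_, ?_, ?_⟩
    · intro k; dsimp only; split <;> norm_num
    · simp
    · have hd : fx - fy = x i - y i := le_antisymm hb (hab ▸ ha)
      rw [hd]
      rw [Finset.sum_congr rfl (fun k _ => by rw [ite_mul, one_mul, zero_mul])]
      simp
  · set a := x j - y j
    set b := x i - y i
    set t := (fx - fy - a) / (b - a) with ht
    have hba : b - a ≠ 0 := ne_of_gt (by linarith)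
    have ht0 : 0 ≤ t := by apply div_nonneg <;> linarith
    have ht1 : t ≤ 1 := by
      rw [ht, div_le_one (by linarith)]; linarith
    refine ⟨fun k => t * (if k = i then 1 else 0) + (1 - t) * (if k = j then 1 else 0),
      ?_, ?_, ?_⟩
    · intro k
      have h1 : (0:ℝ) ≤ (if k = i then (1:ℝ) else 0) := by split <;> norm_num
      have h2 : (0:ℝ) ≤ (if k = j then (1:ℝ) else 0) := by split <;> norm_num
      exact add_nonneg (mul_nonneg ht0 h1) (mul_nonneg (by linarith) h2)
    · rw [Finset.sum_add_distrib, ← Finset.mul_sum, ← Finset.mul_sum]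
      simp
    · have expand : ∀ k ∈ Finset.univ,
          (t * (if k = i then (1:ℝ) else 0) + (1 - t) * (if k = j then 1 else 0)) * (x k - y k)
          = (if k = i then t * (x k - y k) else 0) + (if k = j then (1 - t) * (x k - y k) else 0) := by
        intro k _; split <;> split <;> ring
      rw [Finset.sum_congr rfl expand, Finset.sum_add_distrib,
        Finset.sum_ite_eq' Finset.univ i, Finset.sum_ite_eq' Finset.univ j]
      simp only [Finset.mem_univ, if_true]
      have : t * (b - a) = fx - fy - a := by
        rw [ht, div_mul_cancel₀ _ hba]
      show fx - fy = t * b + (1 - t) * a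
      linarith [this]
end

section
/- Let φ_1, …, φ_B ∈ ℝ^d with ‖φ_i‖ ≤ 1 and η > 0 with ηB < 1/3. Define H = ∏_{i=1}^{B}(I − η φ_i φ_iᵀ). Then the matrix inequalities I − 2η(1 + ηB/(1−2ηB)) ∑_{i=1}^B φ_i φ_iᵀ ⪯ HᵀH ⪯ I − 2η(1 − ηB/(1−2ηB)) ∑_{i=1}^B φ_i φ_iᵀ hold in the positive-semidefinite order. -/
/-!
Write `x_B = x`, `x_i = (I - η φ_i φ_iᵀ) x_{i+1}`, so that `H x = x_0`, and put
`b_i = ⟪φ_i, x_{i+1}⟫`, `a_i = ⟪φ_i, x⟫`. Each factor changes the squared norm by exactly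
`(2η - η²‖φ_i‖²) b_i²`, so `‖x‖² - ‖H x‖²` lies between `(2η - η²) ∑ b_i²` and `2η ∑ b_i²`.
Since `x - x_{i+1} = η ∑_{j > i} b_j φ_j`, we have `a_i = b_i + η c_i` with
`c_i = ⟪φ_i, ∑_{j > i} b_j φ_j⟫`, and `2 ∑ b_i c_i = ‖∑ b_j φ_j‖² - ∑ b_j² ‖φ_j‖²` telescopes.
This yields `(1 - η) ∑ b² ≤ ∑ a² ≤ (1 + η (B - 1) + η² B²) ∑ b²`, and for `ηB < 1/3` the
constants of the theorem dominate the resulting ones.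
-/

open Matrix

open scoped RealInnerProductSpace

theorem norm_smul_sq_le_sq {E : Type*} [SeminormedAddCommGroup E] [NormedSpace ℝ E] (r : ℝ)
    {v : E} (hv : ‖v‖ ≤ 1) : ‖r • v‖ ^ 2 ≤ r ^ 2 := by
  rw [norm_smul, mul_pow, Real.norm_eq_abs, sq_abs]
  exact mul_le_of_le_one_right (sq_nonneg r) (pow_le_one₀ (norm_nonneg v) hv)

theorem norm_sum_range_sq_le {E : Type*} [SeminormedAddCommGroup E] (w : ℕ → E) (K : ℕ) :
    ‖∑ k ∈ Finset.range K, w k‖ ^ 2 ≤ K * ∑ k ∈ Finset.range K, ‖w k‖ ^ 2 := by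
  calc ‖∑ k ∈ Finset.range K, w k‖ ^ 2 ≤ (∑ k ∈ Finset.range K, ‖w k‖) ^ 2 := by
        gcongr; exact norm_sum_le _ _
    _ ≤ K * ∑ k ∈ Finset.range K, ‖w k‖ ^ 2 := by
        simpa using sq_sum_le_card_mul_sum_sq (s := Finset.range K) (f := fun k => ‖w k‖)

section PrefixSums

variable {E : Type*} [NormedAddCommGroup E] [InnerProductSpace ℝ E]

theorem norm_sum_range_sq_eq (w : ℕ → E) (K : ℕ) :
    ‖∑ k ∈ Finset.range K, w k‖ ^ 2 =
      ∑ k ∈ Finset.range K, (‖w k‖ ^ 2 + 2 * ⟪w k, ∑ j ∈ Finset.range k, w j⟫) := by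
  induction K with
  | zero => simp
  | succ K ih =>
    rw [Finset.sum_range_succ, Finset.sum_range_succ, norm_add_sq_real, ih, real_inner_comm]
    ring

variable {u : ℕ → E} (b : ℕ → ℝ)

theorem two_mul_sum_mul_inner_prefix (K : ℕ) :
    2 * ∑ k ∈ Finset.range K, b k * ⟪u k, ∑ j ∈ Finset.range k, b j • u j⟫ =
      ‖∑ k ∈ Finset.range K, b k • u k‖ ^ 2 - ∑ k ∈ Finset.range K, ‖b k • u k‖ ^ 2 := by
  rw [norm_sum_range_sq_eq, Finset.mul_sum, ← Finset.sum_sub_distrib]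
  exact Finset.sum_congr rfl fun k _ => by rw [real_inner_smul_left]; ring

theorem inner_prefix_sq_le (hu : ∀ k, ‖u k‖ ≤ 1) {k K : ℕ} (hk : k ≤ K) :
    ⟪u k, ∑ j ∈ Finset.range k, b j • u j⟫ ^ 2 ≤ K * ∑ j ∈ Finset.range K, b j ^ 2 :=
  calc ⟪u k, ∑ j ∈ Finset.range k, b j • u j⟫ ^ 2
      ≤ ‖∑ j ∈ Finset.range k, b j • u j‖ ^ 2 := by
        rw [← sq_abs]
        gcongr
        exact (abs_real_inner_le_norm _ _).trans (mul_le_of_le_one_left (norm_nonneg _) (hu k))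
    _ ≤ k * ∑ j ∈ Finset.range k, b j ^ 2 :=
        (norm_sum_range_sq_le _ k).trans <| mul_le_mul_of_nonneg_left
          (Finset.sum_le_sum fun j _ => norm_smul_sq_le_sq (b j) (hu j)) k.cast_nonneg
    _ ≤ K * ∑ j ∈ Finset.range K, b j ^ 2 := by gcongr

theorem sum_sq_add_inner_prefix_ge (hu : ∀ k, ‖u k‖ ≤ 1) {η : ℝ} (hη : 0 ≤ η) (K : ℕ) :
    (1 - η) * ∑ k ∈ Finset.range K, b k ^ 2 ≤
      ∑ k ∈ Finset.range K, (b k + η * ⟪u k, ∑ j ∈ Finset.range k, b j • u j⟫) ^ 2 := by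
  set c := fun k => ⟪u k, ∑ j ∈ Finset.range k, b j • u j⟫
  have hcross := two_mul_sum_mul_inner_prefix b (u := u) K
  have hdrop : ∑ k ∈ Finset.range K, b k ^ 2 + η * (2 * ∑ k ∈ Finset.range K, b k * c k) ≤
      ∑ k ∈ Finset.range K, (b k + η * c k) ^ 2 := by
    rw [Finset.mul_sum, Finset.mul_sum, ← Finset.sum_add_distrib]
    exact Finset.sum_le_sum fun k _ => by nlinarith [sq_nonneg (η * c k)]
  nlinarith [Finset.sum_le_sum fun k (_ : k ∈ Finset.range K) => norm_smul_sq_le_sq (b k) (hu k),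
    sq_nonneg ‖∑ k ∈ Finset.range K, b k • u k‖]

theorem sum_sq_add_inner_prefix_le (hu : ∀ k, ‖u k‖ ≤ 1) {η : ℝ} (hη : 0 ≤ η) (K : ℕ) :
    ∑ k ∈ Finset.range K, (b k + η * ⟪u k, ∑ j ∈ Finset.range k, b j • u j⟫) ^ 2 ≤
      (1 + η * (K - 1) + η ^ 2 * K ^ 2) * ∑ k ∈ Finset.range K, b k ^ 2 := by
  set c := fun k => ⟪u k, ∑ j ∈ Finset.range k, b j • u j⟫
  have hexpand : ∑ k ∈ Finset.range K, (b k + η * c k) ^ 2 = ∑ k ∈ Finset.range K, b k ^ 2 +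
      η * (2 * ∑ k ∈ Finset.range K, b k * c k) + η ^ 2 * ∑ k ∈ Finset.range K, c k ^ 2 := by
    simp only [Finset.mul_sum, ← Finset.sum_add_distrib]
    exact Finset.sum_congr rfl fun k _ => by ring
  have hcross : 2 * ∑ k ∈ Finset.range K, b k * c k ≤ (K - 1) * ∑ k ∈ Finset.range K, b k ^ 2 := by
    rw [two_mul_sum_mul_inner_prefix]
    obtain _ | K := K
    · simp
    have hv := norm_sum_range_sq_le (fun k => b k • u k) (K + 1)
    push_cast at hv ⊢
    nlinarith [Finset.sum_le_sum fun k (_ : k ∈ Finset.range (K + 1)) =>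
      norm_smul_sq_le_sq (b k) (hu k), K.cast_nonneg (α := ℝ)]
  have hc : ∑ k ∈ Finset.range K, c k ^ 2 ≤ K ^ 2 * ∑ k ∈ Finset.range K, b k ^ 2 :=
    calc ∑ k ∈ Finset.range K, c k ^ 2 ≤ ∑ k ∈ Finset.range K, K * ∑ j ∈ Finset.range K, b j ^ 2 :=
          Finset.sum_le_sum fun k hk => inner_prefix_sq_le b hu (Finset.mem_range.mp hk).le
      _ = K ^ 2 * ∑ k ∈ Finset.range K, b k ^ 2 := by
          rw [Finset.sum_const, Finset.card_range, nsmul_eq_mul]; ring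
  rw [hexpand]
  nlinarith [mul_le_mul_of_nonneg_left hcross hη, mul_le_mul_of_nonneg_left hc (sq_nonneg η)]

end PrefixSums

section Iterate

variable {E : Type*} [NormedAddCommGroup E] [InnerProductSpace ℝ E]

def contractionIterate (η : ℝ) (u : ℕ → E) (x : E) : ℕ → E
  | 0 => x
  | k + 1 => contractionIterate η u x k - (η * ⟪u k, contractionIterate η u x k⟫) • u k

variable (η : ℝ) (u : ℕ → E) (x : E)

local notation "z" => contractionIterate η u x

theorem contractionIterate_eq_sub_sum (K : ℕ) :
    z K = x - η • ∑ k ∈ Finset.range K, ⟪u k, z k⟫ • u k := by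
  induction K with
  | zero => simp [contractionIterate]
  | succ K ih =>
    rw [contractionIterate, Finset.sum_range_succ, smul_add, smul_smul, ← sub_sub, ← ih]

theorem norm_contractionIterate_sq (K : ℕ) :
    ‖z K‖ ^ 2 = ‖x‖ ^ 2 - ∑ k ∈ Finset.range K, (2 * η - η ^ 2 * ‖u k‖ ^ 2) * ⟪u k, z k⟫ ^ 2 := by
  induction K with
  | zero => simp [contractionIterate]
  | succ K ih =>
    rw [contractionIterate, Finset.sum_range_succ, norm_sub_sq_real, real_inner_smul_right,
      norm_smul, mul_pow, Real.norm_eq_abs, sq_abs, ih, real_inner_comm]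
    ring

theorem inner_eq_add_inner_prefix (k : ℕ) :
    ⟪u k, x⟫ = ⟪u k, z k⟫ + η * ⟪u k, ∑ j ∈ Finset.range k, ⟪u j, z j⟫ • u j⟫ := by
  rw [← real_inner_smul_right, ← inner_add_right, contractionIterate_eq_sub_sum, sub_add_cancel]

variable {η u}

theorem norm_contractionIterate_sq_ge (hu : ∀ k, ‖u k‖ ≤ 1) (hη0 : 0 ≤ η) (hη1 : η < 1)
    (K : ℕ) :
    ‖x‖ ^ 2 - 2 * η / (1 - η) * ∑ k ∈ Finset.range K, ⟪u k, x⟫ ^ 2 ≤ ‖z K‖ ^ 2 := by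
  have hb := sum_sq_add_inner_prefix_ge (fun k => ⟪u k, z k⟫) hu hη0 K
  simp only [← inner_eq_add_inner_prefix] at hb
  have hz : ‖x‖ ^ 2 - 2 * η * ∑ k ∈ Finset.range K, ⟪u k, z k⟫ ^ 2 ≤ ‖z K‖ ^ 2 := by
    rw [norm_contractionIterate_sq, Finset.mul_sum]
    gcongr with k
    nlinarith [sq_nonneg ⟪u k, z k⟫, mul_nonneg (sq_nonneg η) (sq_nonneg ‖u k‖)]
  have hb' : 2 * η * ∑ k ∈ Finset.range K, ⟪u k, z k⟫ ^ 2 ≤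
      2 * η / (1 - η) * ∑ k ∈ Finset.range K, ⟪u k, x⟫ ^ 2 := by
    rw [div_mul_eq_mul_div, le_div_iff₀ (by linarith)]
    nlinarith
  linarith

theorem norm_contractionIterate_sq_le (hu : ∀ k, ‖u k‖ ≤ 1) (hη0 : 0 ≤ η) (hη1 : η < 1)
    (K : ℕ) :
    ‖z K‖ ^ 2 ≤ ‖x‖ ^ 2 - (2 * η - η ^ 2) / (1 + η * (K - 1) + η ^ 2 * K ^ 2) *
      ∑ k ∈ Finset.range K, ⟪u k, x⟫ ^ 2 := by
  have hb := sum_sq_add_inner_prefix_le (fun k => ⟪u k, z k⟫) hu hη0 K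
  simp only [← inner_eq_add_inner_prefix] at hb
  have hz : ‖z K‖ ^ 2 ≤ ‖x‖ ^ 2 - (2 * η - η ^ 2) * ∑ k ∈ Finset.range K, ⟪u k, z k⟫ ^ 2 := by
    rw [norm_contractionIterate_sq, Finset.mul_sum]
    gcongr with k
    exact mul_le_of_le_one_right (sq_nonneg η) (pow_le_one₀ (norm_nonneg _) (hu k))
  have hD : 0 < 1 + η * (K - 1) + η ^ 2 * K ^ 2 := by
    nlinarith [mul_nonneg hη0 (K.cast_nonneg (α := ℝ)), sq_nonneg (η * K)]
  have hb' : (2 * η - η ^ 2) / (1 + η * (K - 1) + η ^ 2 * K ^ 2) *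
      ∑ k ∈ Finset.range K, ⟪u k, x⟫ ^ 2 ≤
        (2 * η - η ^ 2) * ∑ k ∈ Finset.range K, ⟪u k, z k⟫ ^ 2 := by
    rw [div_mul_eq_mul_div, div_le_iff₀ hD]
    have hc : 0 ≤ 2 * η - η ^ 2 := by nlinarith
    nlinarith [mul_le_mul_of_nonneg_left hb hc]
  linarith

end Iterate

theorem two_mul_div_one_sub_le {η m : ℝ} (hη : 0 ≤ η) (hm : 1 ≤ m) (hηm : η * m < 1 / 2) :
    2 * η / (1 - η) ≤ 2 * η * (1 + η * m / (1 - 2 * η * m)) := by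
  have hτ : η ≤ η * m := le_mul_of_one_le_right hη hm
  have h1 : 0 < 1 - η := by linarith
  have h2 : 0 < 1 - 2 * η * m := by linarith
  rw [one_add_div h2.ne', mul_div_assoc', div_le_div_iff₀ h1 h2]
  nlinarith [mul_nonneg hη (mul_nonneg hη (by linarith : 0 ≤ η * m))]

theorem two_mul_one_sub_le_div {η m : ℝ} (hη : 0 ≤ η) (hm : 1 ≤ m) (hηm : η * m < 1 / 3) :
    2 * η * (1 - η * m / (1 - 2 * η * m)) ≤
      (2 * η - η ^ 2) / (1 + η * (m - 1) + η ^ 2 * m ^ 2) := by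
  have hτ : η ≤ η * m := le_mul_of_one_le_right hη hm
  have h2 : 0 < 1 - 2 * η * m := by linarith
  have hD : 0 < 1 + η * (m - 1) + η ^ 2 * m ^ 2 := by nlinarith
  rw [one_sub_div h2.ne', mul_div_assoc', div_le_div_iff₀ h2 hD]
  have key : 0 ≤ η * (η + 4 * (η * m) * (η * m - η) + 6 * (η * m) ^ 3) := by
    have : 0 ≤ η * m := by linarith
    have : 0 ≤ η * m - η := by linarith
    positivity
  nlinarith [key]

def finRevSeq {α : Type*} [Zero α] {B : ℕ} (φ : Fin B → α) (k : ℕ) : α :=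
  if h : k < B then φ (Fin.rev ⟨k, h⟩) else 0

theorem norm_finRevSeq_le {E : Type*} [SeminormedAddCommGroup E] {B : ℕ} {φ : Fin B → E}
    (hφ : ∀ i, ‖φ i‖ ≤ 1) (k : ℕ) : ‖finRevSeq φ k‖ ≤ 1 := by
  unfold finRevSeq
  split_ifs
  exacts [hφ _, by simp]

theorem sum_range_finRevSeq {α M : Type*} [Zero α] [AddCommMonoid M] {B : ℕ} (φ : Fin B → α)
    (f : α → M) : ∑ k ∈ Finset.range B, f (finRevSeq φ k) = ∑ i, f (φ i) := by
  rw [Finset.sum_range fun k => f (finRevSeq φ k), ← Equiv.sum_comp Fin.revPerm fun i => f (φ i)]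
  exact Finset.sum_congr rfl fun i _ => by simp [finRevSeq, i.isLt]

section Matrix

variable {n : Type*} [Fintype n]

theorem toLp_one_sub_smul_vecMulVec_mulVec [DecidableEq n] (η : ℝ) (v y : n → ℝ) :
    WithLp.toLp 2 ((1 - η • vecMulVec v v) *ᵥ y) =
      WithLp.toLp 2 y - (η * ⟪WithLp.toLp 2 v, WithLp.toLp 2 y⟫) • WithLp.toLp 2 v := by
  rw [EuclideanSpace.inner_toLp_toLp, star_trivial, dotProduct_comm]
  simp [sub_mulVec, smul_mulVec, vecMulVec_mulVec, smul_smul]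

/-- The product applies the factor of `φ (B - 1)` first, hence the reversed sequence. -/
theorem toLp_ofFn_prod_mulVec [DecidableEq n] (η : ℝ) {B : ℕ} (φ : Fin B → n → ℝ) (x : n → ℝ) :
    WithLp.toLp 2 ((List.ofFn fun i => 1 - η • vecMulVec (φ i) (φ i)).prod *ᵥ x) =
      contractionIterate η (finRevSeq fun i => WithLp.toLp 2 (φ i)) (WithLp.toLp 2 x) B := by
  set L := List.ofFn fun i => 1 - η • vecMulVec (φ i) (φ i)
  suffices h : ∀ k ≤ B, WithLp.toLp 2 ((L.drop (B - k)).prod *ᵥ x) =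
      contractionIterate η (finRevSeq fun i => WithLp.toLp 2 (φ i)) (WithLp.toLp 2 x) k by
    simpa using h B le_rfl
  intro k hk
  induction k with
  | zero =>
    rw [Nat.sub_zero, List.drop_eq_nil_of_le (by simp [L])]
    simp [contractionIterate]
  | succ k ih =>
    have hlt : B - (k + 1) < L.length := by simp only [L, List.length_ofFn]; omega
    have hu : finRevSeq (fun i => WithLp.toLp 2 (φ i)) k =
        WithLp.toLp 2 (φ ⟨B - (k + 1), by omega⟩) := by
      simp [finRevSeq, show k < B by omega, Fin.rev]
    rw [List.drop_eq_getElem_cons hlt, show B - (k + 1) + 1 = B - k by omega, List.prod_cons,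
      ← mulVec_mulVec, List.getElem_ofFn, toLp_one_sub_smul_vecMulVec_mulVec, ih (by omega),
      contractionIterate, hu]

theorem dotProduct_transpose_mul_self_mulVec (A : Matrix n n ℝ) (x : n → ℝ) :
    x ⬝ᵥ ((Aᵀ * A) *ᵥ x) = ‖WithLp.toLp 2 (A *ᵥ x)‖ ^ 2 := by
  rw [← real_inner_self_eq_norm_sq, EuclideanSpace.inner_toLp_toLp, star_trivial,
    ← mulVec_mulVec, dotProduct_mulVec, vecMul_transpose]

theorem dotProduct_one_sub_smul_sum_vecMulVec_mulVec [DecidableEq n] {B : ℕ}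
    (φ : Fin B → n → ℝ) (c : ℝ) (x : n → ℝ) :
    x ⬝ᵥ ((1 - c • ∑ i, vecMulVec (φ i) (φ i)) *ᵥ x) = ‖WithLp.toLp 2 x‖ ^ 2 -
      c * ∑ k ∈ Finset.range B,
        ⟪finRevSeq (fun i => WithLp.toLp 2 (φ i)) k, WithLp.toLp 2 x⟫ ^ 2 := by
  rw [sum_range_finRevSeq (f := fun v => ⟪v, WithLp.toLp 2 x⟫ ^ 2), ← real_inner_self_eq_norm_sq,
    EuclideanSpace.inner_toLp_toLp]
  simp [sub_mulVec, smul_mulVec, sum_mulVec, vecMulVec_mulVec, sum_dotProduct, sq,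
    EuclideanSpace.inner_toLp_toLp, dotProduct_comm x]

theorem isHermitian_one_sub_smul_sum_vecMulVec [DecidableEq n] {ι : Type*} [Fintype ι]
    (φ : ι → n → ℝ) (c : ℝ) : (1 - c • ∑ i, vecMulVec (φ i) (φ i)).IsHermitian := by
  have hS := posSemidef_sum Finset.univ fun i _ => by
    simpa using posSemidef_vecMulVec_self_star (φ i)
  exact isHermitian_one.sub (hS.isHermitian.smul (IsSelfAdjoint.all c))

theorem posSemidef_sub_of_dotProduct_mulVec_le {A C : Matrix n n ℝ} (hA : A.IsHermitian)
    (hC : C.IsHermitian) (h : ∀ x, x ⬝ᵥ (A *ᵥ x) ≤ x ⬝ᵥ (C *ᵥ x)) : (C - A).PosSemidef :=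
  .of_dotProduct_mulVec_nonneg (hC.sub hA) fun x => by
    simpa [sub_mulVec, dotProduct_sub] using h x

end Matrix

theorem product_contraction_psd_bounds_general (d B : ℕ) (hB : 0 < B)
    (η : ℝ) (hη : 0 < η) (hηB : η * B < 1 / 3)
    (φ : Fin B → Fin d → ℝ) (hφ : ∀ i, ∑ k, φ i k ^ 2 ≤ 1)
    (H : Matrix (Fin d) (Fin d) ℝ)
    (hH : H = (List.ofFn (fun i : Fin B =>
      (1 : Matrix (Fin d) (Fin d) ℝ) - η • Matrix.vecMulVec (φ i) (φ i))).prod)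
    (S : Matrix (Fin d) (Fin d) ℝ)
    (hS : S = ∑ i, Matrix.vecMulVec (φ i) (φ i)) :
    (Hᵀ * H - (1 - (2 * η * (1 + η * B / (1 - 2 * η * B))) • S)).PosSemidef ∧
      ((1 - (2 * η * (1 - η * B / (1 - 2 * η * B))) • S) - Hᵀ * H).PosSemidef := by
  have hu := norm_finRevSeq_le (φ := fun i => WithLp.toLp 2 (φ i)) fun i => by
    rw [← sq_le_one_iff₀ (norm_nonneg _), EuclideanSpace.real_norm_sq_eq]
    exact hφ i
  have hB1 : (1 : ℝ) ≤ B := by exact_mod_cast hB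
  have hη1 : η < 1 := by nlinarith
  have hHerm : (Hᵀ * H).IsHermitian := by simpa using isHermitian_conjTranspose_mul_self H
  subst hS
  refine ⟨posSemidef_sub_of_dotProduct_mulVec_le (isHermitian_one_sub_smul_sum_vecMulVec _ _)
    hHerm fun x => ?_, posSemidef_sub_of_dotProduct_mulVec_le hHerm
    (isHermitian_one_sub_smul_sum_vecMulVec _ _) fun x => ?_⟩
  all_goals rw [dotProduct_one_sub_smul_sum_vecMulVec_mulVec, dotProduct_transpose_mul_self_mulVec,
    hH, toLp_ofFn_prod_mulVec]
  · refine le_trans ?_ (norm_contractionIterate_sq_ge _ hu hη.le hη1 B)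
    gcongr
    exact two_mul_div_one_sub_le hη.le hB1 (by linarith)
  · refine (norm_contractionIterate_sq_le _ hu hη.le hη1 B).trans ?_
    gcongr
    exact two_mul_one_sub_le_div hη.le hB1 hηB

theorem product_contraction_psd_bounds (d B : ℕ) (hd : 0 < d) (hB : 0 < B)
    (η : ℝ) (hη : 0 < η) (hηB : η * B < 1 / 3)
    (φ : Fin B → Fin d → ℝ) (hφ : ∀ i, ∑ k, φ i k ^ 2 ≤ 1)
    (H : Matrix (Fin d) (Fin d) ℝ)
    (hH : H = (List.ofFn (fun i : Fin B =>
      (1 : Matrix (Fin d) (Fin d) ℝ) - η • Matrix.vecMulVec (φ i) (φ i))).prod)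
    (S : Matrix (Fin d) (Fin d) ℝ)
    (hS : S = ∑ i, Matrix.vecMulVec (φ i) (φ i)) :
    (Hᵀ * H - (1 - (2 * η * (1 + η * B / (1 - 2 * η * B))) • S)).PosSemidef ∧
      ((1 - (2 * η * (1 - η * B / (1 - 2 * η * B))) • S) - Hᵀ * H).PosSemidef :=
  product_contraction_psd_bounds_general d B hB η hη hηB φ hφ H hH S hS
end
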